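/- arXiv:math/0611447 — 3 statements merged into one kernel-verified Lean document; each statement's English description precedes it below -/
import Mathlib

section
/- For every complex number w with positive real part, ∑_{k=0}^∞ (-1)^k/(k² + w²) = 1/(2w²) + π/(2w·sinh(πw)). -/
/-
Mittag-Leffler's expansion `π cot(πx) = 1/x + ∑_{n ≥ 1} 2x/(x² - n²)`, taken at `x = i w`, sums
`∑_{n ≥ 0} 1/(n² + w²)` as `1/(2w²) + π coth(πw)/(2w)`. The alternating series is twice its even part
minus the whole series, and the even part is a quarter of the same series at `w/2`; the identity
`coth(y) - coth(2y) = 1/sinh(2y)` turns the result into `1/(2w²) + π/(2w sinh(πw))`.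
-/

open Real Complex

local notation "ℂ_ℤ" => integerComplement

theorem HasSum.neg_one_pow_mul_of_even {R : Type*} [NormedRing R] [CompleteSpace R]
    {a : ℕ → R} {s e : R} (hs : HasSum a s) (he : HasSum (fun k ↦ a (2 * k)) e) :
    HasSum (fun n ↦ (-1) ^ n * a n) (2 * e - s) := by
  have hodd : HasSum (fun k ↦ a (2 * k + 1)) (s - e) := by
    obtain ⟨o, ho⟩ := hs.summable.comp_injective (i := fun k ↦ 2 * k + 1)
      (fun _ _ h ↦ by simpa using h)
    rwa [← (he.even_add_odd ho).unique hs, add_sub_cancel_left]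
  have := HasSum.even_add_odd (f := fun n ↦ (-1) ^ n * a n) (by simpa [pow_mul] using he)
    (by simpa [pow_succ, pow_mul] using hodd.neg)
  convert this using 1
  noncomm_ring

namespace Complex

lemma I_mul_mem_integerComplement_of_re_pos {w : ℂ} (hw : 0 < w.re) : I * w ∈ ℂ_ℤ := by
  rintro ⟨n, hn⟩
  exact hw.ne (by simpa using congrArg im hn)

lemma div_two_mem_integerComplement {x : ℂ} (hx : x ∈ ℂ_ℤ) : x / 2 ∈ ℂ_ℤ := by
  rintro ⟨n, hn⟩
  exact hx ⟨2 * n, by push_cast; rw [hn]; ring⟩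

lemma cot_mul_I (z : ℂ) : cot (z * I) = -I * (cosh z / sinh z) := by
  rw [cot_eq_cos_div_sin, cos_mul_I, sin_mul_I, div_mul_eq_div_div, div_I]
  ring

lemma cosh_div_sinh_sub_cosh_two_mul_div_sinh_two_mul {y : ℂ} (h : sinh (2 * y) ≠ 0) :
    cosh y / sinh y - cosh (2 * y) / sinh (2 * y) = 1 / sinh (2 * y) := by
  rw [sinh_two_mul] at *
  have hs : sinh y ≠ 0 := fun h' ↦ h (by simp [h'])
  have hc : cosh y ≠ 0 := fun h' ↦ h (by simp [h'])
  field_simp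
  rw [cosh_two_mul]
  linear_combination cosh_sq_sub_sinh_sq y

end Complex

theorem hasSum_one_div_nat_sq_add_sq {w : ℂ} (hw : I * w ∈ ℂ_ℤ) :
    HasSum (fun n : ℕ ↦ 1 / ((n : ℂ) ^ 2 + w ^ 2))
      (1 / (2 * w ^ 2) + π * Complex.cosh (π * w) / (2 * w * Complex.sinh (π * w))) := by
  have hw0 : w ≠ 0 := by rintro rfl; exact integerComplement.ne_zero hw (mul_zero I)
  have hden (n : ℕ) : ((n + 1 : ℕ) : ℂ) ^ 2 + w ^ 2 ≠ 0 := by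
    have := integerComplement_pow_two_ne_pow_two hw (n + 1)
    contrapose! this
    push_cast at this ⊢
    linear_combination (-1 : ℂ) * this + w ^ 2 * I_sq
  have hcot : HasSum (cotTerm (I * w)) (π * Complex.cot (π * (I * w)) - 1 / (I * w)) := by
    rw [cot_series_rep' hw]
    exact (summable_cotTerm hw).hasSum
  have hterm (n : ℕ) :
      1 / (((n + 1 : ℕ) : ℂ) ^ 2 + w ^ 2) = -(2 * I * w)⁻¹ * cotTerm (I * w) n := by
    rw [cotTerm_identity hw, show (I * w + (n + 1)) * (I * w - (n + 1)) =
      -(((n + 1 : ℕ) : ℂ) ^ 2 + w ^ 2) by push_cast; linear_combination w ^ 2 * I_sq]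
    field_simp
  have htail : HasSum (fun n : ℕ ↦ 1 / (((n + 1 : ℕ) : ℂ) ^ 2 + w ^ 2))
      (-(2 * I * w)⁻¹ * (π * Complex.cot (π * (I * w)) - 1 / (I * w))) :=
    (hcot.mul_left (-(2 * I * w)⁻¹)).congr_fun hterm
  convert HasSum.zero_add (f := fun n : ℕ ↦ 1 / ((n : ℂ) ^ 2 + w ^ 2)) htail using 1
  rw [show (π : ℂ) * (I * w) = π * w * I by ring, Complex.cot_mul_I]
  field_simp
  simp only [Nat.cast_zero, I_sq]
  ring

theorem hasSum_neg_one_pow_div_nat_sq_add_sq {w : ℂ} (hw : I * w ∈ ℂ_ℤ) :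
    HasSum (fun n : ℕ ↦ (-1 : ℂ) ^ n / ((n : ℂ) ^ 2 + w ^ 2))
      (1 / (2 * w ^ 2) + π / (2 * w * Complex.sinh (π * w))) := by
  have hsinh : Complex.sinh (2 * (π * (w / 2))) ≠ 0 := by
    simpa [show (π : ℂ) * (I * w) = 2 * (π * (w / 2)) * I by ring, Complex.sin_mul_I]
      using sin_pi_mul_ne_zero hw
  have heven : HasSum (fun k : ℕ ↦ 1 / (((2 * k : ℕ) : ℂ) ^ 2 + w ^ 2))
      ((1 / (2 * (w / 2) ^ 2) + π * Complex.cosh (π * (w / 2)) /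
        (2 * (w / 2) * Complex.sinh (π * (w / 2)))) / 4) := by
    have hhalf : I * (w / 2) ∈ ℂ_ℤ := by
      rw [← mul_div_assoc]
      exact div_two_mem_integerComplement hw
    refine ((hasSum_one_div_nat_sq_add_sq hhalf).div_const 4).congr_fun fun k ↦ ?_
    rw [div_div]
    push_cast
    ring
  have hval : 1 / (2 * w ^ 2) + π / (2 * w * Complex.sinh (π * w)) =
      2 * ((1 / (2 * (w / 2) ^ 2) + π * Complex.cosh (π * (w / 2)) /
        (2 * (w / 2) * Complex.sinh (π * (w / 2)))) / 4) -
      (1 / (2 * w ^ 2) + π * Complex.cosh (π * w) / (2 * w * Complex.sinh (π * w))) := by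
    rw [show (π : ℂ) * w = 2 * (π * (w / 2)) by ring]
    linear_combination -(π / (2 * w)) * cosh_div_sinh_sub_cosh_two_mul_div_sinh_two_mul hsinh
  rw [hval]
  exact ((hasSum_one_div_nat_sq_add_sq hw).neg_one_pow_mul_of_even heven).congr_fun
    fun n ↦ (mul_one_div _ _).symm

/-- For every complex `w` with positive real part,
`∑_{k=0}^∞ (-1)^k/(k² + w²) = 1/(2w²) + π/(2 w sinh(π w))`. -/
theorem stmt1 (w : ℂ) (hw : 0 < w.re) :
    HasSum (fun k : ℕ => (-1 : ℂ) ^ k / ((k : ℂ) ^ 2 + w ^ 2))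
      (1 / (2 * w ^ 2) + (π : ℂ) / (2 * w * Complex.sinh ((π : ℂ) * w))) :=
  hasSum_neg_one_pow_div_nat_sq_add_sq (I_mul_mem_integerComplement_of_re_pos hw)
end

section
/- Let c > 0, and for τ > 1/c² set z = -cτ(1 + i√(1 - 1/(c²τ))) and v(x,t) = e^{-z²t}·e^{xz}. Then for fixed real numbers x ≥ 0, t ≥ 0 and s: if s < cx + t then e^{τs}|v(x,t)| → 0 as τ → ∞, and if s > cx + t then e^{τs}|v(x,t)| → ∞ as τ → ∞. -/
/-!
Taking real parts, `|v(x,t)| = e^{-Re(z²) t + x Re z}`. For `τ > 1/c²` the square root is real, so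
`Re z = -cτ` and `Re(z²) = c²τ² (1 - (1 - 1/(c²τ))) = τ`. Hence `e^{τs}|v(x,t)| = e^{τ(s - cx - t)}`
for all large `τ`, and the sign of `s - cx - t` decides whether this tends to `0` or to `∞`.
-/

open Real Complex Filter

lemma re_neg_mul_mul_one_add_I_mul (c τ w : ℝ) : (-(c : ℂ) * τ * (1 + I * w)).re = -(c * τ) := by
  simp

lemma re_sq_neg_mul_mul_one_add_I_mul (c τ w : ℝ) :
    ((-(c : ℂ) * τ * (1 + I * w)) ^ 2).re = (c * τ) ^ 2 * (1 - w ^ 2) := by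
  simp only [pow_two, mul_re, mul_im, neg_re, neg_im, ofReal_re, ofReal_im, add_re, add_im,
    one_re, one_im, I_re, I_im]
  ring

lemma re_sq_eq_of_one_div_sq_lt (c τ : ℝ) (hc : c ≠ 0) (hτ : 1 / c ^ 2 < τ) :
    ((-(c : ℂ) * τ * (1 + I * (√(1 - 1 / (c ^ 2 * τ)) : ℂ))) ^ 2).re = τ := by
  have hc2 : 0 < c ^ 2 := by positivity
  have hτ0 : 0 < τ := (one_div_pos.2 hc2).trans hτ
  have hle : 1 / (c ^ 2 * τ) ≤ 1 := by
    rw [div_le_one (by positivity)]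
    exact (div_lt_iff₀' hc2).1 hτ |>.le
  rw [re_sq_neg_mul_mul_one_add_I_mul, sq_sqrt (by linarith)]
  field_simp
  ring

lemma norm_exp_mul_exp (ζ : ℂ) (x t : ℝ) :
    ‖exp (-ζ ^ 2 * t) * exp (x * ζ)‖ = Real.exp (-(ζ ^ 2).re * t + x * ζ.re) := by
  rw [norm_mul, norm_exp, norm_exp, ← Real.exp_add]
  simp

theorem stmt4_general (c : ℝ) (hc : 0 < c)
    (z : ℝ → ℂ)
    (hz : ∀ τ : ℝ, 1 / c ^ 2 < τ →
      z τ = -(c : ℂ) * τ * (1 + Complex.I * (Real.sqrt (1 - 1 / (c ^ 2 * τ)) : ℂ)))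
    (v : ℝ → ℝ → ℝ → ℂ)
    (hv : ∀ τ x t, v τ x t = Complex.exp (-(z τ) ^ 2 * t) * Complex.exp (x * z τ))
    (x t s : ℝ) :
    (s < c * x + t →
      Tendsto (fun τ : ℝ => Real.exp (τ * s) * ‖v τ x t‖) atTop (nhds 0)) ∧
    (s > c * x + t →
      Tendsto (fun τ : ℝ => Real.exp (τ * s) * ‖v τ x t‖) atTop atTop) := by
  have hexp : (fun τ : ℝ => Real.exp (τ * (s - c * x - t))) =ᶠ[atTop]
      fun τ => Real.exp (τ * s) * ‖v τ x t‖ := by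
    filter_upwards [eventually_gt_atTop (1 / c ^ 2)] with τ hτ
    rw [hv, norm_exp_mul_exp, hz τ hτ, re_sq_eq_of_one_div_sq_lt c τ hc.ne' hτ,
      re_neg_mul_mul_one_add_I_mul, ← Real.exp_add]
    ring_nf
  refine ⟨fun hs => ?_, fun hs => ?_⟩
  · refine (tendsto_exp_comp_nhds_zero.2 ?_).congr' hexp
    exact tendsto_id.atTop_mul_const_of_neg (by linarith)
  · refine (tendsto_exp_comp_atTop.2 ?_).congr' hexp
    exact tendsto_id.atTop_mul_const (by linarith)

/-- For `c > 0`, `τ > 1/c²`, let `z(τ) = -cτ(1 + i√(1 - 1/(c²τ)))` and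
`v(x,t) = e^{-z²t} e^{xz}`.  For fixed `x ≥ 0`, `t ≥ 0`, `s` real:
if `s < cx + t` then `e^{τs}|v(x,t)| → 0` as `τ → ∞`, and
if `s > cx + t` then `e^{τs}|v(x,t)| → ∞` as `τ → ∞`. -/
theorem stmt4 (c : ℝ) (hc : 0 < c)
    (z : ℝ → ℂ)
    (hz : ∀ τ : ℝ, 1 / c ^ 2 < τ →
      z τ = -(c : ℂ) * τ * (1 + Complex.I * (Real.sqrt (1 - 1 / (c ^ 2 * τ)) : ℂ)))
    (v : ℝ → ℝ → ℝ → ℂ)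
    (hv : ∀ τ x t, v τ x t = Complex.exp (-(z τ) ^ 2 * t) * Complex.exp (x * z τ))
    (x t s : ℝ) (hx : 0 ≤ x) (ht : 0 ≤ t) :
    (s < c * x + t →
      Tendsto (fun τ : ℝ => Real.exp (τ * s) * ‖v τ x t‖) atTop (nhds 0)) ∧
    (s > c * x + t →
      Tendsto (fun τ : ℝ => Real.exp (τ * s) * ‖v τ x t‖) atTop atTop) :=
  stmt4_general c hc z hz v hv x t s
end

section
/- Let a, c, T > 0 with T > 2ca, let A > 0, m a nonnegative integer, and suppose g : ℝ → ℝ satisfies A/2 ≤ τ^m·e^{2caτ}·g(τ) ≤ 3A/2 for all τ ≥ τ₀. For δ ∈ (0,1) and σ ∈ (0,1), set τ_σ(δ) = (σ/T)·|log δ|, and let h_δ : ℝ → ℝ satisfy |h_δ(τ) - g(τ)| ≤ (c√τ + 1/√(2τ))·δ for all τ ≥ τ₀. Then |log h_δ(τ_σ(δ))/τ_σ(δ) + 2ca| = O(log|log δ| / |log δ|) as δ → 0⁺. -/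
open Real Filter Topology

/-!
Put `τ = τ_σ(δ)`, so that `δ = exp (-(T/σ) τ)`. Multiplied by the weight `τ^m e^{2caτ}`, the
noise `(c√τ + 1/√(2τ)) δ` becomes `O(τ^{m+1} e^{-(T/σ - 2ca)τ})`, which tends to `0` because
`T/σ > T > 2ca`. Hence the weighted noisy indicator eventually stays in `[A/4, 7A/4]`, so its
logarithm is bounded, and `log h_δ(τ) / τ + 2ca = (O(1) - m log τ) / τ = O(log τ / τ)`.
Since `τ` is a constant multiple of `|log δ|`, this is `O(log |log δ| / |log δ|)`.
-/

theorem abs_log_le_max_of_mem_Icc {b B x : ℝ} (hb : 0 < b) (hx : x ∈ Set.Icc b B) :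
    |log x| ≤ max |log b| |log B| := by
  have hbx : log b ≤ log x := log_le_log hb hx.1
  have hxB : log x ≤ log B := log_le_log (hb.trans_le hx.1) hx.2
  rw [abs_le]
  constructor
  · linarith [neg_abs_le (log b), le_max_left |log b| |log B|]
  · linarith [le_abs_self (log B), le_max_right |log b| |log B|]

theorem log_div_add_eq (m : ℕ) (κ : ℝ) {τ y : ℝ} (hτ : 0 < τ) (hy : 0 < y) :
    log y / τ + κ = (log (τ ^ m * exp (κ * τ) * y) - m * log τ) / τ := by
  rw [log_mul (by positivity) hy.ne', log_mul (by positivity) (exp_pos _).ne', log_pow, log_exp]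
  field_simp
  ring

theorem eventually_abs_log_div_add_le {h : ℝ → ℝ} {κ b B : ℝ} (m : ℕ) (hb : 0 < b)
    (hbound : ∀ᶠ τ in atTop, τ ^ m * exp (κ * τ) * h τ ∈ Set.Icc b B) :
    ∀ᶠ τ in atTop, |log (h τ) / τ + κ| ≤ (m + 1) * log τ / τ := by
  set K := max |log b| |log B|
  have hlog : ∀ᶠ τ in atTop, K ≤ log τ := tendsto_log_atTop.eventually_ge_atTop K
  filter_upwards [hbound, hlog, eventually_ge_atTop 1] with τ hτh hτK hτ1
  have hτ : 0 < τ := one_pos.trans_le hτ1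
  have hw : 0 < τ ^ m * exp (κ * τ) := by positivity
  have hh : 0 < h τ := pos_of_mul_pos_right (hb.trans_le hτh.1) hw.le
  rw [log_div_add_eq m κ hτ hh, abs_div, abs_of_pos hτ]
  gcongr
  calc |log (τ ^ m * exp (κ * τ) * h τ) - m * log τ|
      ≤ |log (τ ^ m * exp (κ * τ) * h τ)| + |m * log τ| := abs_sub _ _
    _ ≤ K + m * log τ := by
      have hmlog : 0 ≤ (m : ℝ) * log τ := mul_nonneg m.cast_nonneg (log_nonneg hτ1)
      rw [abs_of_nonneg hmlog]
      exact add_le_add_left (abs_log_le_max_of_mem_Icc hb hτh) _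
    _ ≤ (m + 1) * log τ := by linarith

theorem eventually_mem_Icc_of_tendsto_sub {α : Type*} {l : Filter α} {u v : α → ℝ}
    {b B r : ℝ} (hr : 0 < r) (hu : ∀ᶠ x in l, u x ∈ Set.Icc b B)
    (hvu : Tendsto (fun x => v x - u x) l (𝓝 0)) :
    ∀ᶠ x in l, v x ∈ Set.Icc (b - r) (B + r) := by
  filter_upwards [hu, hvu.eventually (Metric.ball_mem_nhds 0 hr)] with x hux hvux
  rw [dist_zero_right, Real.norm_eq_abs, abs_lt] at hvux
  exact ⟨by linarith [hux.1], by linarith [hux.2]⟩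

theorem mul_sqrt_add_one_div_sqrt_two_mul_le {c τ : ℝ} (hc : 0 ≤ c) (hτ : 1 ≤ τ) :
    c * √τ + 1 / √(2 * τ) ≤ (c + 1) * τ := by
  have hsqrt : √τ ≤ τ := sqrt_le_iff.2 ⟨by linarith, by nlinarith⟩
  have hinv : 1 / √(2 * τ) ≤ 1 := by
    rw [div_le_one (by positivity)]
    exact one_le_sqrt.2 (by linarith)
  nlinarith

theorem tendsto_weighted_noise_atTop (m : ℕ) {c κ β : ℝ} (hc : 0 ≤ c) (hκβ : κ < β) :
    Tendsto (fun τ => τ ^ m * exp (κ * τ) * ((c * √τ + 1 / √(2 * τ)) * exp (-(β * τ))))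
      atTop (𝓝 0) := by
  have hdecay : Tendsto (fun τ : ℝ => (c + 1) * (τ ^ ((m + 1 : ℕ) : ℝ) * exp (-(β - κ) * τ)))
      atTop (𝓝 0) := by
    simpa using (tendsto_rpow_mul_exp_neg_mul_atTop_nhds_zero _ _ (sub_pos.2 hκβ)).const_mul (c + 1)
  refine squeeze_zero' ?_ ?_ hdecay
  · filter_upwards [eventually_gt_atTop 0] with τ hτ
    positivity
  · filter_upwards [eventually_ge_atTop 1] with τ hτ
    rw [rpow_natCast, pow_succ]
    calc τ ^ m * exp (κ * τ) * ((c * √τ + 1 / √(2 * τ)) * exp (-(β * τ)))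
        = (c * √τ + 1 / √(2 * τ)) * (τ ^ m * exp (-(β - κ) * τ)) := by
          rw [show -(β - κ) * τ = κ * τ + -(β * τ) by ring, exp_add]; ring
      _ ≤ (c + 1) * τ * (τ ^ m * exp (-(β - κ) * τ)) := by
          gcongr
          exact mul_sqrt_add_one_div_sqrt_two_mul_le hc hτ
      _ = _ := by ring

theorem eventually_weighted_mem_Icc_of_noise {g : ℝ → ℝ} {H : ℝ → ℝ → ℝ}
    {κ β c b B r τ₀ : ℝ} (m : ℕ) (hc : 0 ≤ c) (hκβ : κ < β) (hβ : 0 < β)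
    (hg : ∀ τ, τ₀ ≤ τ → τ ^ m * exp (κ * τ) * g τ ∈ Set.Icc b B)
    (hH : ∀ δ ∈ Set.Ioo (0 : ℝ) 1, ∀ τ, τ₀ ≤ τ →
      |H δ τ - g τ| ≤ (c * √τ + 1 / √(2 * τ)) * δ) (hr : 0 < r) :
    ∀ᶠ τ in atTop, τ ^ m * exp (κ * τ) * H (exp (-(β * τ))) τ ∈ Set.Icc (b - r) (B + r) := by
  refine eventually_mem_Icc_of_tendsto_sub hr ((eventually_ge_atTop τ₀).mono hg) ?_
  refine squeeze_zero_norm' ?_ (tendsto_weighted_noise_atTop m hc hκβ)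
  filter_upwards [eventually_ge_atTop τ₀, eventually_gt_atTop 0] with τ hτ₀ hτ
  rw [← mul_sub, norm_mul, Real.norm_of_nonneg (by positivity), Real.norm_eq_abs]
  gcongr
  exact hH _ ⟨exp_pos _, exp_lt_one_iff.2 (by simp only [neg_neg_iff_pos]; positivity)⟩ τ hτ₀

theorem eventually_log_mul_div_le (k : ℝ) (hk : 0 < k) :
    ∀ᶠ L in atTop, log (k * L) / (k * L) ≤ 2 / k * (log L / L) := by
  filter_upwards [tendsto_log_atTop.eventually_ge_atTop |log k|, eventually_gt_atTop 0]
    with L hL hL0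
  rw [log_mul hk.ne' hL0.ne', div_mul_div_comm, mul_comm k L]
  gcongr
  linarith [le_abs_self (log k)]

/-- Stability of the enclosure method under noise: if `g` satisfies the two-sided bound
`A/2 ≤ τ^m e^{2caτ} g(τ) ≤ 3A/2` for `τ ≥ τ₀`, `T > 2ca`, and the noisy indicators `H δ`
satisfy `|H δ τ - g τ| ≤ (c√τ + 1/√(2τ))δ`, then with `τ_σ(δ) = (σ/T)|log δ|` one has
`|log(H δ (τ_σ(δ)))/τ_σ(δ) + 2ca| = O(log|log δ|/|log δ|)` as `δ → 0⁺`. -/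
theorem stmt19 (a c T A τ₀ σ : ℝ) (ha : 0 < a) (hc : 0 < c) (hT : 2 * c * a < T)
    (hA : 0 < A) (hσ : σ ∈ Set.Ioo (0 : ℝ) 1) (m : ℕ)
    (g : ℝ → ℝ)
    (hg : ∀ τ : ℝ, τ₀ ≤ τ →
      A / 2 ≤ τ ^ m * Real.exp (2 * c * a * τ) * g τ ∧
      τ ^ m * Real.exp (2 * c * a * τ) * g τ ≤ 3 * A / 2)
    (H : ℝ → ℝ → ℝ)
    (hH : ∀ δ ∈ Set.Ioo (0 : ℝ) 1, ∀ τ : ℝ, τ₀ ≤ τ →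
      |H δ τ - g τ| ≤ (c * Real.sqrt τ + 1 / Real.sqrt (2 * τ)) * δ) :
    ∃ C : ℝ, 0 < C ∧ ∀ᶠ δ in nhdsWithin (0 : ℝ) (Set.Ioi 0),
      |Real.log (H δ ((σ / T) * |Real.log δ|)) / ((σ / T) * |Real.log δ|) + 2 * c * a|
        ≤ C * Real.log |Real.log δ| / |Real.log δ| := by
  obtain ⟨hσ0, hσ1⟩ := hσ
  have hT0 : 0 < T := (by positivity : 0 < 2 * c * a).trans hT
  have hβ : 2 * c * a < T / σ := hT.trans ((lt_div_iff₀ hσ0).2 (by nlinarith))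
  have hrate := eventually_abs_log_div_add_le m (by linarith : 0 < A / 2 - A / 4)
    (eventually_weighted_mem_Icc_of_noise m hc.le hβ (div_pos hT0 hσ0) hg hH
      (by positivity : 0 < A / 4))
  have hlogabs : Tendsto (fun δ => |log δ|) (𝓝[>] 0) atTop :=
    tendsto_abs_atBot_atTop.comp tendsto_log_nhdsGT_zero
  refine ⟨2 * (m + 1) * (T / σ), by positivity, ?_⟩
  filter_upwards [(hlogabs.const_mul_atTop (div_pos hσ0 hT0)).eventually hrate,
    hlogabs.eventually (eventually_log_mul_div_le (σ / T) (div_pos hσ0 hT0)),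
    Ioo_mem_nhdsGT one_pos] with δ hδrate hδlog hδ
  have hδτ : exp (-(T / σ * (σ / T * |log δ|))) = δ := by
    rw [show T / σ * (σ / T * |log δ|) = |log δ| by field_simp,
      abs_of_neg (log_neg hδ.1 hδ.2), neg_neg, exp_log hδ.1]
  rw [hδτ] at hδrate
  calc _ ≤ (m + 1) * log (σ / T * |log δ|) / (σ / T * |log δ|) := hδrate
    _ ≤ (m + 1) * (2 / (σ / T) * (log |log δ| / |log δ|)) := by
      rw [mul_div_assoc]; gcongr
    _ = 2 * (m + 1) * (T / σ) * log |log δ| / |log δ| := by field_simp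
end
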